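/- arXiv:0908.1583 — 7 statements merged into one kernel-verified Lean document; each statement's English description precedes it below -/
import Mathlib

section
/- Let V be a real vector space and E a nonempty set of linear functionals on V (the 'effects'), containing a distinguished functional e (the 'deterministic effect') and closed under the complement a ↦ e − a. Let ρ₀, ρ₁ ∈ V satisfy e ρ₀ = e ρ₁ = 1 and 0 ≤ a ρᵢ ≤ 1 for every a ∈ E and i = 0, 1. Let π₀, π₁ ≥ 0 with π₀ + π₁ = 1 and set δ := π₁ • ρ₁ − π₀ • ρ₀. Then the optimal success probability of binary discrimination equals the Helstrom-type expression: sSup { π₀ * ((e − a) ρ₀) + π₁ * (a ρ₁) | a ∈ E } = (1 + sSup { a δ | a ∈ E } − sInf { a δ | a ∈ E }) / 2. -/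
/-!
With `δ = π₁ • ρ₁ - π₀ • ρ₀`, the success probability of the test `(a, e - a)` is `π₀ + a δ`,
so the optimum is `π₀ + sup a δ`. Since `(e - a) δ = (π₁ - π₀) - a δ`, closure of `E` under
complements makes `{a δ | a ∈ E}` symmetric about `(π₁ - π₀) / 2`, hence its infimum is
`(π₁ - π₀) - sup a δ`, and the operational norm is `2 sup a δ - (π₁ - π₀)`.
-/

section ConditionallyCompleteGroup

variable {α : Type*} [ConditionallyCompleteLinearOrder α] [AddCommGroup α] [IsOrderedAddMonoid α]
  {s : Set α}

theorem csSup_const_add_image (hne : s.Nonempty) (hbdd : BddAbove s) (c : α) :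
    sSup ((c + ·) '' s) = c + sSup s :=
  ((OrderIso.addLeft c).map_csSup' hne hbdd).symm

theorem csInf_eq_sub_csSup_of_sub_mem (hne : s.Nonempty) (hbdd : BddAbove s) {c : α}
    (hsymm : ∀ x ∈ s, c - x ∈ s) : sInf s = c - sSup s := by
  have himage : (c - ·) '' s = s :=
    Set.Subset.antisymm (Set.image_subset_iff.2 hsymm) fun x hx =>
      ⟨c - x, hsymm x hx, sub_sub_cancel c x⟩
  calc sInf s = sInf ((c - ·) '' s) := by rw [himage]
    _ = c - sSup s := ((OrderIso.subLeft c).map_csSup' hne hbdd).symm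

end ConditionallyCompleteGroup

section BinaryDiscrimination

variable {V : Type*} [AddCommGroup V] [Module ℝ V]

theorem success_prob_eq_add_apply (e a : V →ₗ[ℝ] ℝ) (ρ₀ ρ₁ : V) (π₀ π₁ : ℝ) :
    π₀ * (e - a) ρ₀ + π₁ * a ρ₁ = π₀ * e ρ₀ + a (π₁ • ρ₁ - π₀ • ρ₀) := by
  simp only [LinearMap.sub_apply, map_sub, map_smul, smul_eq_mul]
  ring

theorem apply_sub_smul_le {a : V →ₗ[ℝ] ℝ} {ρ₀ ρ₁ : V} {π₀ π₁ : ℝ} (hπ0 : 0 ≤ π₀) (hπ1 : 0 ≤ π₁)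
    (ha0 : 0 ≤ a ρ₀) (ha1 : a ρ₁ ≤ 1) : a (π₁ • ρ₁ - π₀ • ρ₀) ≤ π₁ := by
  simp only [map_sub, map_smul, smul_eq_mul]
  nlinarith

theorem apply_sub_smul_of_apply_eq_one {e : V →ₗ[ℝ] ℝ} {ρ₀ ρ₁ : V} (h0 : e ρ₀ = 1)
    (h1 : e ρ₁ = 1) (π₀ π₁ : ℝ) : e (π₁ • ρ₁ - π₀ • ρ₀) = π₁ - π₀ := by
  simp [h0, h1]

end BinaryDiscrimination

theorem optimal_discrimination_helstrom_general
    (V : Type*) [AddCommGroup V] [Module ℝ V]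
    (E : Set (V →ₗ[ℝ] ℝ))
    (e : V →ₗ[ℝ] ℝ) (he : e ∈ E)
    (hcompl : ∀ a ∈ E, e - a ∈ E)
    (ρ₀ ρ₁ : V) (h0 : e ρ₀ = 1) (h1 : e ρ₁ = 1)
    (hb0 : ∀ a ∈ E, 0 ≤ a ρ₀ ∧ a ρ₀ ≤ 1)
    (hb1 : ∀ a ∈ E, 0 ≤ a ρ₁ ∧ a ρ₁ ≤ 1)
    (π₀ π₁ : ℝ) (hπ0 : 0 ≤ π₀) (hπ1 : 0 ≤ π₁) (hsum : π₀ + π₁ = 1)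
    (δ : V) (hδ : δ = π₁ • ρ₁ - π₀ • ρ₀) :
    sSup {x : ℝ | ∃ a ∈ E, x = π₀ * ((e - a) ρ₀) + π₁ * (a ρ₁)} =
      (1 + sSup {x : ℝ | ∃ a ∈ E, x = a δ} - sInf {x : ℝ | ∃ a ∈ E, x = a δ}) / 2 := by
  subst hδ
  set S := {x : ℝ | ∃ a ∈ E, x = a (π₁ • ρ₁ - π₀ • ρ₀)}
  have hne : S.Nonempty := ⟨_, e, he, rfl⟩
  have hbdd : BddAbove S := ⟨π₁, by
    rintro _ ⟨a, ha, rfl⟩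
    exact apply_sub_smul_le hπ0 hπ1 (hb0 a ha).1 (hb1 a ha).2⟩
  have hsucc : {x : ℝ | ∃ a ∈ E, x = π₀ * ((e - a) ρ₀) + π₁ * (a ρ₁)} = (π₀ + ·) '' S := by
    ext x
    constructor
    · rintro ⟨a, ha, rfl⟩
      exact ⟨_, ⟨a, ha, rfl⟩, by rw [success_prob_eq_add_apply, h0, mul_one]⟩
    · rintro ⟨_, ⟨a, ha, rfl⟩, rfl⟩
      exact ⟨a, ha, by rw [success_prob_eq_add_apply, h0, mul_one]⟩
  have hsymm : ∀ x ∈ S, (π₁ - π₀) - x ∈ S := by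
    rintro _ ⟨a, ha, rfl⟩
    exact ⟨e - a, hcompl a ha, by rw [LinearMap.sub_apply, apply_sub_smul_of_apply_eq_one h0 h1]⟩
  rw [hsucc, csSup_const_add_image hne hbdd, csInf_eq_sub_csSup_of_sub_mem hne hbdd hsymm]
  linarith

/-- Helstrom-type formula for the optimal binary discrimination probability:
`p_succ^{opt} = (1 + ‖π₁ρ₁ − π₀ρ₀‖)/2`, where the operational norm of `δ`
relative to the effect set `E` is `sSup {a δ | a ∈ E} − sInf {a δ | a ∈ E}`. -/
theorem optimal_discrimination_helstrom
    (V : Type*) [AddCommGroup V] [Module ℝ V]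
    (E : Set (V →ₗ[ℝ] ℝ)) (hE : E.Nonempty)
    (e : V →ₗ[ℝ] ℝ) (he : e ∈ E)
    (hcompl : ∀ a ∈ E, e - a ∈ E)
    (ρ₀ ρ₁ : V) (h0 : e ρ₀ = 1) (h1 : e ρ₁ = 1)
    (hb0 : ∀ a ∈ E, 0 ≤ a ρ₀ ∧ a ρ₀ ≤ 1)
    (hb1 : ∀ a ∈ E, 0 ≤ a ρ₁ ∧ a ρ₁ ≤ 1)
    (π₀ π₁ : ℝ) (hπ0 : 0 ≤ π₀) (hπ1 : 0 ≤ π₁) (hsum : π₀ + π₁ = 1)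
    (δ : V) (hδ : δ = π₁ • ρ₁ - π₀ • ρ₀) :
    sSup {x : ℝ | ∃ a ∈ E, x = π₀ * ((e - a) ρ₀) + π₁ * (a ρ₁)} =
      (1 + sSup {x : ℝ | ∃ a ∈ E, x = a δ} - sInf {x : ℝ | ∃ a ∈ E, x = a δ}) / 2 :=
  optimal_discrimination_helstrom_general V E e he hcompl ρ₀ ρ₁ h0 h1 hb0 hb1 π₀ π₁ hπ0 hπ1 hsum δ
    hδ
end

section
/- Let V and W be real vector spaces, E_A a nonempty set of linear functionals on V and E_B a nonempty set of linear functionals on W. Let C : V →ₗ[ℝ] W be a linear map such that b ∘ C ∈ E_A for every b ∈ E_B (the defining property of a channel: it pulls effects back to effects). Let δ ∈ V be such that the set { a δ | a ∈ E_A } is bounded above and below. Then sSup { b (C δ) | b ∈ E_B } − sInf { b (C δ) | b ∈ E_B } ≤ sSup { a δ | a ∈ E_A } − sInf { a δ | a ∈ E_A }. Moreover, if there exists a linear map C' : W →ₗ[ℝ] V with C' ∘ C = id_V and a ∘ C' ∈ E_B for every a ∈ E_A (i.e. C is reversible with inverse channel C'), then equality holds. -/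
/-- Monotonicity of the operational norm under channels: if `C` pulls effects back
to effects then `‖C δ‖ ≤ ‖δ‖`, with equality when `C` is reversible. -/
theorem operational_norm_monotone
    (V W : Type*) [AddCommGroup V] [Module ℝ V] [AddCommGroup W] [Module ℝ W]
    (EA : Set (V →ₗ[ℝ] ℝ)) (hEA : EA.Nonempty)
    (EB : Set (W →ₗ[ℝ] ℝ)) (hEB : EB.Nonempty)
    (C : V →ₗ[ℝ] W) (hC : ∀ b ∈ EB, b ∘ₗ C ∈ EA)
    (δ : V)
    (hbdd_above : BddAbove {x : ℝ | ∃ a ∈ EA, x = a δ})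
    (hbdd_below : BddBelow {x : ℝ | ∃ a ∈ EA, x = a δ}) :
    (sSup {x : ℝ | ∃ b ∈ EB, x = b (C δ)} - sInf {x : ℝ | ∃ b ∈ EB, x = b (C δ)}
      ≤ sSup {x : ℝ | ∃ a ∈ EA, x = a δ} - sInf {x : ℝ | ∃ a ∈ EA, x = a δ}) ∧
    ((∃ C' : W →ₗ[ℝ] V, C' ∘ₗ C = LinearMap.id ∧ ∀ a ∈ EA, a ∘ₗ C' ∈ EB) →
      sSup {x : ℝ | ∃ b ∈ EB, x = b (C δ)} - sInf {x : ℝ | ∃ b ∈ EB, x = b (C δ)}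
        = sSup {x : ℝ | ∃ a ∈ EA, x = a δ} - sInf {x : ℝ | ∃ a ∈ EA, x = a δ}) := by
  set SA := {x : ℝ | ∃ a ∈ EA, x = a δ} with hSA
  set SB := {x : ℝ | ∃ b ∈ EB, x = b (C δ)} with hSB
  have hsub : SB ⊆ SA := by
    rintro x ⟨b, hb, rfl⟩
    exact ⟨b ∘ₗ C, hC b hb, rfl⟩
  have hBne : SB.Nonempty := by
    obtain ⟨b, hb⟩ := hEB
    exact ⟨b (C δ), b, hb, rfl⟩
  constructor
  · have h1 : sSup SB ≤ sSup SA := csSup_le_csSup hbdd_above hBne hsub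
    have h2 : sInf SA ≤ sInf SB := csInf_le_csInf hbdd_below hBne hsub
    linarith
  · rintro ⟨C', hCC', hC'⟩
    have hsub' : SA ⊆ SB := by
      rintro x ⟨a, ha, rfl⟩
      refine ⟨a ∘ₗ C', hC' a ha, ?_⟩
      have : (a ∘ₗ C') (C δ) = (a ∘ₗ (C' ∘ₗ C)) δ := rfl
      rw [this, hCC']
      rfl
    rw [Set.Subset.antisymm hsub hsub']
end

section
/- Let V be a real vector space, E a convex set of linear functionals on V containing the zero functional 0 and a distinguished functional e. Let ρ₀, ρ₁ ∈ V satisfy e ρ₀ = e ρ₁ = 1 and a ρᵢ ≥ 0 for every a ∈ E and i = 0, 1. If there exists a ∈ E with a ρ₀ > a ρ₁, then there exists a₀ ∈ E such that (e − a₀) ρ₀ = a₀ ρ₁ and a₀ ρ₁ < 1/2. (In operational terms: the binary test {a₀, e − a₀} distinguishes ρ₀ from ρ₁ with symmetric error probabilities p(1|0) = p(0|1) strictly smaller than 1/2.) -/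
/-- Worst-case discrimination: in a convex theory, two distinct deterministic states
can be distinguished by a binary test `{a₀, e − a₀}` with symmetric error
probabilities `p(1|0) = p(0|1)` strictly smaller than `1/2`. -/
theorem worst_case_discrimination
    (V : Type*) [AddCommGroup V] [Module ℝ V]
    (E : Set (V →ₗ[ℝ] ℝ)) (hconv : Convex ℝ E)
    (hzero : (0 : V →ₗ[ℝ] ℝ) ∈ E)
    (e : V →ₗ[ℝ] ℝ) (he : e ∈ E)
    (ρ₀ ρ₁ : V) (hρ₀ : e ρ₀ = 1) (hρ₁ : e ρ₁ = 1)
    (hpos : ∀ a ∈ E, 0 ≤ a ρ₀ ∧ 0 ≤ a ρ₁)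
    (hsep : ∃ a ∈ E, a ρ₁ < a ρ₀) :
    ∃ a₀ ∈ E, (e - a₀) ρ₀ = a₀ ρ₁ ∧ a₀ ρ₁ < 1 / 2 := by
  obtain ⟨a, ha, hlt⟩ := hsep
  obtain ⟨h0, h1⟩ := hpos a ha
  set a' : V →ₗ[ℝ] ℝ := (1/2 : ℝ) • a + (1/2 : ℝ) • e with ha'def
  have ha' : a' ∈ E := hconv ha he (by norm_num) (by norm_num) (by norm_num)
  set α := a' ρ₀ with hα
  set β := a' ρ₁ with hβ
  have hαval : α = (a ρ₀ + 1) / 2 := by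
    simp [hα, ha'def, hρ₀]; ring
  have hβval : β = (a ρ₁ + 1) / 2 := by
    simp [hβ, ha'def, hρ₁]; ring
  have hαhalf : (1:ℝ)/2 ≤ α := by rw [hαval]; linarith
  have hβhalf : (1:ℝ)/2 ≤ β := by rw [hβval]; linarith
  have hβα : β < α := by rw [hαval, hβval]; linarith
  have hsum : (1:ℝ) ≤ α + β := by linarith
  have hsumpos : (0:ℝ) < α + β := by linarith
  set q : ℝ := 1 / (α + β) with hq
  have hq0 : 0 ≤ q := by positivity
  have hq1 : q ≤ 1 := by
    rw [hq]; rw [div_le_one hsumpos]; linarith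
  refine ⟨q • a' + (1 - q) • (0 : V →ₗ[ℝ] ℝ), ?_, ?_, ?_⟩
  · exact hconv ha' hzero hq0 (by linarith) (by ring)
  · have : q * α + q * β = 1 := by
      rw [hq]; field_simp
    simp only [LinearMap.sub_apply, LinearMap.add_apply, LinearMap.smul_apply,
      LinearMap.zero_apply, hρ₀, ← hα, ← hβ, smul_eq_mul, mul_zero, add_zero]
    linarith
  · have : q • a' ρ₁ + (1 - q) • (0:ℝ) = q * β := by simp [hβ]
    simp only [LinearMap.add_apply, LinearMap.smul_apply, LinearMap.zero_apply,
      smul_eq_mul, mul_zero, add_zero, ← hβ]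
    rw [hq, div_mul_eq_mul_div, div_lt_div_iff₀ hsumpos two_pos]
    linarith
end

section
/- Let V be a real vector space and C ⊆ V a convex cone containing 0 (i.e. C is closed under addition and under multiplication by nonnegative scalars). Let ρ ∈ C and define the refinement set D_ρ := { x ∈ C | ρ − x ∈ C }. If σ ∈ C lies in the linear span of D_ρ, then there exists a real number k with 0 < k ≤ 1 such that k • σ ∈ D_ρ, i.e. k • σ ∈ C and ρ − k • σ ∈ C. -/
/-- If `σ` belongs to a convex cone `C` and lies in the linear span of the refinement
set `D_ρ = {x ∈ C | ρ − x ∈ C}` of `ρ ∈ C`, then `k • σ ∈ D_ρ` for some `0 < k ≤ 1`. -/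
theorem span_refinement_set_mem
    (V : Type*) [AddCommGroup V] [Module ℝ V]
    (C : Set V) (hzero : (0 : V) ∈ C)
    (hadd : ∀ x ∈ C, ∀ y ∈ C, x + y ∈ C)
    (hsmul : ∀ x ∈ C, ∀ c : ℝ, 0 ≤ c → c • x ∈ C)
    (ρ : V) (hρ : ρ ∈ C)
    (σ : V) (hσ : σ ∈ C)
    (hspan : σ ∈ Submodule.span ℝ {x | x ∈ C ∧ ρ - x ∈ C}) :
    ∃ k : ℝ, 0 < k ∧ k ≤ 1 ∧ k • σ ∈ C ∧ ρ - k • σ ∈ C := by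
  -- Key claim: every element of the span is dominated (two-sidedly) by a multiple of ρ.
  have key : ∀ y ∈ Submodule.span ℝ {x | x ∈ C ∧ ρ - x ∈ C},
      ∃ M : ℝ, 0 ≤ M ∧ M • ρ - y ∈ C ∧ M • ρ + y ∈ C := by
    intro y hy
    induction hy using Submodule.span_induction with
    | mem x hx =>
        refine ⟨1, zero_le_one, ?_, ?_⟩
        · simpa using hx.2
        · simpa using hadd ρ hρ x hx.1
    | zero => exact ⟨0, le_rfl, by simpa using hzero, by simpa using hzero⟩
    | add a b _ _ iha ihb =>
        obtain ⟨M1, hM1, h1m, h1p⟩ := iha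
        obtain ⟨M2, hM2, h2m, h2p⟩ := ihb
        refine ⟨M1 + M2, by linarith, ?_, ?_⟩
        · have := hadd _ h1m _ h2m
          have e : (M1 + M2) • ρ - (a + b) = (M1 • ρ - a) + (M2 • ρ - b) := by
            rw [add_smul]; abel
          rwa [e]
        · have := hadd _ h1p _ h2p
          have e : (M1 + M2) • ρ + (a + b) = (M1 • ρ + a) + (M2 • ρ + b) := by
            rw [add_smul]; abel
          rwa [e]
    | smul c a _ ih =>
        obtain ⟨M, hM, hm, hp⟩ := ih
        refine ⟨|c| * M, mul_nonneg (abs_nonneg c) hM, ?_, ?_⟩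
        · rcases le_or_gt 0 c with hc | hc
          · have := hsmul _ hm c hc
            have e : (|c| * M) • ρ - c • a = c • (M • ρ - a) := by
              rw [abs_of_nonneg hc, smul_sub, mul_smul]
            rwa [e]
          · have := hsmul _ hp (-c) (by linarith)
            have e : (|c| * M) • ρ - c • a = (-c) • (M • ρ + a) := by
              rw [abs_of_neg hc, smul_add, neg_smul, neg_smul, mul_smul, neg_smul]
              abel
            rwa [e]
        · rcases le_or_gt 0 c with hc | hc
          · have := hsmul _ hp c hc
            have e : (|c| * M) • ρ + c • a = c • (M • ρ + a) := by
              rw [abs_of_nonneg hc, smul_add, mul_smul]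
            rwa [e]
          · have := hsmul _ hm (-c) (by linarith)
            have e : (|c| * M) • ρ + c • a = (-c) • (M • ρ - a) := by
              rw [abs_of_neg hc, smul_sub, neg_smul, neg_smul, mul_smul, neg_smul]
              abel
            rwa [e]
  obtain ⟨M, hM, hm, _⟩ := key σ hspan
  set N : ℝ := max M 1 with hN
  have hN1 : (1 : ℝ) ≤ N := le_max_right _ _
  have hNpos : (0 : ℝ) < N := lt_of_lt_of_le one_pos hN1
  refine ⟨N⁻¹, inv_pos.mpr hNpos, inv_le_one_of_one_le₀ hN1, ?_, ?_⟩
  · exact hsmul _ hσ _ (le_of_lt (inv_pos.mpr hNpos))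
  · have hNσ : N • ρ - σ ∈ C := by
      have h1 : (N - M) • ρ ∈ C := hsmul _ hρ _ (by simp [hN, sub_nonneg, le_max_left])
      have := hadd _ h1 _ hm
      have e : (N - M) • ρ + (M • ρ - σ) = N • ρ - σ := by
        rw [sub_smul]; abel
      rwa [e] at this
    have := hsmul _ hNσ N⁻¹ (le_of_lt (inv_pos.mpr hNpos))
    have e : N⁻¹ • (N • ρ - σ) = ρ - N⁻¹ • σ := by
      rw [smul_sub, smul_smul, inv_mul_cancel₀ (ne_of_gt hNpos), one_smul]
    rwa [e] at this
end

section
/- Let m, n be positive natural numbers. Let ρ be a real positive semidefinite matrix indexed by (Fin m × Fin n) with trace 1, and let Ψ : Fin m × Fin n → ℝ be a unit vector (Σ_p (Ψ p)^2 = 1). Suppose that for every symmetric matrix a : Matrix (Fin m) (Fin m) ℝ and every symmetric matrix b : Matrix (Fin n) (Fin n) ℝ one has trace ((ρ − vecMulVec Ψ Ψ) * (a ⊗ₖ b)) = 0, where ⊗ₖ denotes the Kronecker product (indexed by Fin m × Fin n) and vecMulVec Ψ Ψ is the rank-one matrix Ψ Ψᵀ. Then ρ = vecMulVec Ψ Ψ.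 -/
/-!
Write `D = ρ - Ψ Ψᵀ`. Testing the hypothesis on `a = Eᵢₖ + Eₖᵢ` and `b = Eⱼₗ + Eₗⱼ` shows that
the symmetric matrix `D` is sent to `-D` by the partial transpose on the second factor, i.e.
`D (i, l) (k, j) = -D (i, j) (k, l)`. In particular `D` vanishes whenever the two indices share a
coordinate, so on the four basis vectors `(i, j), (i, l), (k, j), (k, l)` the quadratic form of
`ρ = Ψ Ψᵀ + D` is `(Ψ ⬝ x)² + 2 d (x₁ x₄ - x₂ x₃)` with `d = D (i, j) (k, l)`. The form
`x₁ x₄ - x₂ x₃` has signature `(2, 2)`, so it takes both signs on the hyperplane `Ψ ⬝ x = 0`, and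
positivity of `ρ` forces `d = 0`.
-/

open scoped Kronecker

/-- The vectors `(-b, a, ±e, ∓c)` lie on the hyperplane `a x₁ + b x₂ + c x₃ + e x₄ = 0` and
give `d (a e - b c) = 0`; the two `2 × 2` principal minors on `{x₁, x₄}` and `{x₂, x₃}` then
give `d² ≤ 0`. -/
theorem eq_zero_of_forall_sq_add_mul_nonneg {a b c e d : ℝ}
    (h : ∀ x₁ x₂ x₃ x₄ : ℝ,
      0 ≤ (a * x₁ + b * x₂ + c * x₃ + e * x₄) ^ 2 + 2 * d * (x₁ * x₄ - x₂ * x₃)) :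
    d = 0 := by
  have h₁ := h (-b) a e (-c)
  have h₂ := h (-b) a (-e) c
  have h₃ : discrim (a * a) (2 * (a * e + d)) (e * e) ≤ 0 :=
    discrim_le_zero fun t => by linarith [h t 0 0 1]
  have h₄ : discrim (b * b) (2 * (b * c - d)) (c * c) ≤ 0 :=
    discrim_le_zero fun t => by linarith [h 0 t 1 0]
  rw [discrim] at h₃ h₄
  nlinarith

namespace Matrix

variable {ι κ R : Type*}

def partialTranspose (M : Matrix (ι × κ) (ι × κ) R) : Matrix (ι × κ) (ι × κ) R :=
  of fun p q => M (p.1, q.2) (q.1, p.2)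

@[simp]
theorem partialTranspose_apply (M : Matrix (ι × κ) (ι × κ) R) (i k : ι) (j l : κ) :
    M.partialTranspose (i, j) (k, l) = M (i, l) (k, j) :=
  rfl

theorem PosSemidef.isSymm_sub_vecMulVec {n : Type*} {ρ : Matrix n n ℝ} (hρ : ρ.PosSemidef)
    (Ψ : n → ℝ) : (ρ - vecMulVec Ψ Ψ).IsSymm := by
  simpa [IsSymm, transpose_vecMulVec] using hρ.isHermitian

section single

variable [DecidableEq ι] [DecidableEq κ]

theorem isSymm_single_add_single [AddCommMonoid R] (i k : ι) (a : R) :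
    (single i k a + single k i a).IsSymm := by
  simp [IsSymm, transpose_single, add_comm]

variable [Fintype ι] [Fintype κ]

theorem trace_mul_single_kronecker_single [CommRing R] (M : Matrix (ι × κ) (ι × κ) R)
    (i k : ι) (j l : κ) :
    (M * single i k (1 : R) ⊗ₖ single j l 1).trace = M (k, l) (i, j) := by
  simp [single_kronecker_single, trace_mul_single]

theorem partialTranspose_eq_neg_of_trace_mul_kronecker_eq_zero [Field R] [CharZero R]
    {D : Matrix (ι × κ) (ι × κ) R} (hD : D.IsSymm)
    (h : ∀ a : Matrix ι ι R, a.IsSymm → ∀ b : Matrix κ κ R, b.IsSymm → (D * a ⊗ₖ b).trace = 0) :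
    D.partialTranspose = -D := by
  ext ⟨i, j⟩ ⟨k, l⟩
  have hikjl := h _ (isSymm_single_add_single i k 1) _ (isSymm_single_add_single j l 1)
  simp only [add_kronecker, kronecker_add, mul_add, trace_add,
    trace_mul_single_kronecker_single] at hikjl
  rw [partialTranspose_apply, neg_apply]
  linear_combination (hikjl - hD.apply (i, j) (k, l) - hD.apply (i, l) (k, j)) / 2

end single

theorem PosSemidef.eq_vecMulVec_of_partialTranspose_sub_eq_neg
    {ρ : Matrix (ι × κ) (ι × κ) ℝ} {Ψ : ι × κ → ℝ} (hρ : ρ.PosSemidef)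
    (hD : (ρ - vecMulVec Ψ Ψ).partialTranspose = -(ρ - vecMulVec Ψ Ψ)) :
    ρ = vecMulVec Ψ Ψ := by
  have hsymm := hρ.isSymm_sub_vecMulVec Ψ
  set D := ρ - vecMulVec Ψ Ψ
  have hanti : ∀ i k j l, D (i, l) (k, j) = -D (i, j) (k, l) := fun i k j l =>
    congrFun (congrFun hD (i, j)) (k, l)
  have hrow : ∀ i j l, D (i, j) (i, l) = 0 := fun i j l => by
    linarith [hanti i i j l, hsymm.apply (i, j) (i, l)]
  have hcol : ∀ i k j, D (i, j) (k, j) = 0 := fun i k j => by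
    linarith [hanti i k j j]
  rw [← sub_eq_zero]
  ext ⟨i, j⟩ ⟨k, l⟩
  refine eq_zero_of_forall_sq_add_mul_nonneg (a := Ψ (i, j)) (b := Ψ (i, l)) (c := Ψ (k, j))
    (e := Ψ (k, l)) fun x₁ x₂ x₃ x₄ => ?_
  have e₁ : D (i, l) (k, j) = -D (i, j) (k, l) := hanti i k j l
  have e₂ : D (k, j) (i, l) = -D (i, j) (k, l) := (hsymm.apply _ _).trans e₁
  have e₃ : D (k, l) (i, j) = D (i, j) (k, l) := hsymm.apply _ _
  have hq := (hρ.submatrix ![(i, j), (i, l), (k, j), (k, l)]).dotProduct_mulVec_nonneg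
    ![x₁, x₂, x₃, x₄]
  rw [show ρ = vecMulVec Ψ Ψ + D by simp [D]] at hq
  simp only [dotProduct, mulVec, Fin.sum_univ_four, submatrix_apply, Matrix.add_apply,
    vecMulVec_apply, Pi.star_apply, star_trivial, cons_val_zero, cons_val_one, cons_val, hrow, hcol,
    e₁, e₂, e₃, add_zero] at hq
  linear_combination hq

end Matrix

theorem real_quantum_local_discriminability_pure_general
    (m n : ℕ)
    (ρ : Matrix (Fin m × Fin n) (Fin m × Fin n) ℝ)
    (hρ : ρ.PosSemidef)
    (Ψ : Fin m × Fin n → ℝ)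
    (h : ∀ a : Matrix (Fin m) (Fin m) ℝ, a.IsSymm →
      ∀ b : Matrix (Fin n) (Fin n) ℝ, b.IsSymm →
        ((ρ - Matrix.vecMulVec Ψ Ψ) * Matrix.kroneckerMap (· * ·) a b).trace = 0) :
    ρ = Matrix.vecMulVec Ψ Ψ :=
  hρ.eq_vecMulVec_of_partialTranspose_sub_eq_neg
    (Matrix.partialTranspose_eq_neg_of_trace_mul_kronecker_eq_zero
      (hρ.isSymm_sub_vecMulVec Ψ) h)

/-- Real quantum theory enjoys local discriminability on pure states: a density
matrix `ρ` on `ℝ^m ⊗ ℝ^n` giving the same expectations as the pure state `Ψ Ψᵀ`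
on all symmetric product observables `a ⊗ₖ b` equals `Ψ Ψᵀ`. -/
theorem real_quantum_local_discriminability_pure
    (m n : ℕ) (hm : 0 < m) (hn : 0 < n)
    (ρ : Matrix (Fin m × Fin n) (Fin m × Fin n) ℝ)
    (hρ : ρ.PosSemidef) (htr : ρ.trace = 1)
    (Ψ : Fin m × Fin n → ℝ) (hΨ : ∑ p, (Ψ p) ^ 2 = 1)
    (h : ∀ a : Matrix (Fin m) (Fin m) ℝ, a.IsSymm →
      ∀ b : Matrix (Fin n) (Fin n) ℝ, b.IsSymm →
        ((ρ - Matrix.vecMulVec Ψ Ψ) * Matrix.kroneckerMap (· * ·) a b).trace = 0) :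
    ρ = Matrix.vecMulVec Ψ Ψ :=
  real_quantum_local_discriminability_pure_general m n ρ hρ Ψ h
end

section
/- Let d be a positive natural number and D : Matrix (Fin d) (Fin d) ℂ a Hermitian matrix with (real) eigenvalues λ₁, …, λ_d (given by IsHermitian.eigenvalues). Then sSup { x : ℝ | ∃ P : Matrix (Fin d) (Fin d) ℂ, P.PosSemidef ∧ (1 − P).PosSemidef ∧ x = ((P * D).trace).re } − sInf { x : ℝ | ∃ P, P.PosSemidef ∧ (1 − P).PosSemidef ∧ x = ((P * D).trace).re } = Σ_i |λ_i|, i.e. the supremum minus the infimum of Tr[PD] over all quantum effects 0 ≤ P ≤ I equals the trace norm of D. -/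
/-!
Diagonalise `D = U Λ U*`. Then `Re Tr[PD] = ∑ᵢ λᵢ qᵢ`, where the `qᵢ` are the diagonal
entries of `U* P U`; for an effect `P` they lie in `[0, 1]`, and every `q ∈ [0, 1]ⁿ` is
attained by the effect `U diag(q) U*`. So the values `Re Tr[PD]` form the image of the unit
cube under `q ↦ ∑ᵢ λᵢ qᵢ`, whose maximum `∑ᵢ max(λᵢ, 0)` and minimum `∑ᵢ min(λᵢ, 0)` differ
by `∑ᵢ |λᵢ|`.
-/

open scoped ComplexOrder

open Finset

lemma isGreatest_image_sum_mul_Icc {n : Type*} [Fintype n] (a : n → ℝ) :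
    IsGreatest ((fun q : n → ℝ ↦ ∑ i, a i * q i) '' Set.Icc 0 1) (∑ i, max (a i) 0) := by
  refine ⟨⟨fun i ↦ if 0 ≤ a i then 1 else 0, ⟨fun i ↦ ?_, fun i ↦ ?_⟩,
    sum_congr rfl fun i _ ↦ ?_⟩, ?_⟩
  · dsimp only; split_ifs <;> norm_num
  · dsimp only; split_ifs <;> norm_num
  · simp only [mul_ite, mul_one, mul_zero, max_def']
  · rintro _ ⟨q, ⟨hq₀, hq₁⟩, rfl⟩
    exact sum_le_sum fun i _ ↦ (mul_le_mul_of_nonneg_right (le_max_left _ _) (hq₀ i)).trans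
      (mul_le_of_le_one_right (le_max_right _ _) (hq₁ i))

lemma isLeast_image_sum_mul_Icc {n : Type*} [Fintype n] (a : n → ℝ) :
    IsLeast ((fun q : n → ℝ ↦ ∑ i, a i * q i) '' Set.Icc 0 1) (∑ i, min (a i) 0) := by
  refine ⟨⟨fun i ↦ if a i ≤ 0 then 1 else 0, ⟨fun i ↦ ?_, fun i ↦ ?_⟩,
    sum_congr rfl fun i _ ↦ ?_⟩, ?_⟩
  · dsimp only; split_ifs <;> norm_num
  · dsimp only; split_ifs <;> norm_num
  · simp only [mul_ite, mul_one, mul_zero, min_def]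
  · rintro _ ⟨q, ⟨hq₀, hq₁⟩, rfl⟩
    refine sum_le_sum fun i _ ↦ ?_
    calc min (a i) 0 = min (a i) 0 * 1 := (mul_one _).symm
      _ ≤ min (a i) 0 * q i := mul_le_mul_of_nonpos_left (hq₁ i) (min_le_right _ _)
      _ ≤ a i * q i := mul_le_mul_of_nonneg_right (min_le_left _ _) (hq₀ i)

namespace Matrix

variable {𝕜 n : Type*} [RCLike 𝕜] [DecidableEq n]

/-- A quantum effect: `0 ≤ P ≤ 1` in the Loewner order. -/
def IsEffect (P : Matrix n n 𝕜) : Prop := P.PosSemidef ∧ (1 - P).PosSemidef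

lemma IsEffect.re_diag_mem_Icc {P : Matrix n n 𝕜} (hP : P.IsEffect) :
    (fun i ↦ RCLike.re (P i i)) ∈ Set.Icc 0 1 := by
  refine ⟨fun i ↦ (RCLike.nonneg_iff.mp (hP.1.diag_nonneg (i := i))).1, fun i ↦ ?_⟩
  have h := (RCLike.nonneg_iff.mp (hP.2.diag_nonneg (i := i))).1
  simp only [sub_apply, one_apply_eq, map_sub, RCLike.one_re, sub_nonneg] at h
  exact h

lemma isEffect_diagonal {q : n → ℝ} (hq : q ∈ Set.Icc 0 1) :
    (diagonal fun i ↦ (q i : 𝕜)).IsEffect := by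
  refine ⟨posSemidef_diagonal_iff.mpr fun i ↦ RCLike.ofReal_nonneg.mpr (hq.1 i), ?_⟩
  rw [← diagonal_one, diagonal_sub, posSemidef_diagonal_iff]
  intro i
  rw [← RCLike.ofReal_one, ← RCLike.ofReal_sub, RCLike.ofReal_nonneg, sub_nonneg]
  exact hq.2 i

variable [Fintype n]

lemma IsEffect.star_mul_mul {P : Matrix n n 𝕜} (hP : P.IsEffect)
    (u : unitary (Matrix n n 𝕜)) :
    (star (u : Matrix n n 𝕜) * P * u).IsEffect := by
  have h := hP.2.conjTranspose_mul_mul_same (u : Matrix n n 𝕜)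
  rw [← star_eq_conjTranspose, mul_sub, sub_mul, mul_one, Unitary.coe_star_mul_self] at h
  exact ⟨by simpa only [star_eq_conjTranspose] using hP.1.conjTranspose_mul_mul_same _, h⟩

lemma IsHermitian.re_trace_mul_eq_sum {D : Matrix n n 𝕜} (hD : D.IsHermitian)
    (P : Matrix n n 𝕜) :
    RCLike.re (P * D).trace = ∑ i, hD.eigenvalues i * RCLike.re
      ((star (hD.eigenvectorUnitary : Matrix n n 𝕜) * P * hD.eigenvectorUnitary) i i) := by
  set U : Matrix n n 𝕜 := (hD.eigenvectorUnitary : Matrix n n 𝕜)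
  have hcycle :
      (P * D).trace = (star U * P * U * diagonal (RCLike.ofReal ∘ hD.eigenvalues)).trace := by
    conv_lhs => rw [hD.spectral_theorem, Unitary.conjStarAlgAut_apply]
    simp only [← mul_assoc]
    rw [trace_mul_cycle, ← mul_assoc, trace_mul_cycle]
  rw [hcycle]
  simp only [trace, diag_apply, mul_diagonal, Function.comp_apply, map_sum, RCLike.re_mul_ofReal,
    mul_comm]

lemma IsHermitian.setOf_isEffect_re_trace_mul_eq_image {D : Matrix n n 𝕜}
    (hD : D.IsHermitian) :
    {x : ℝ | ∃ P : Matrix n n 𝕜, P.IsEffect ∧ x = RCLike.re (P * D).trace} =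
      (fun q : n → ℝ ↦ ∑ i, hD.eigenvalues i * q i) '' Set.Icc 0 1 := by
  set U := hD.eigenvectorUnitary
  ext x
  constructor
  · rintro ⟨P, hP, rfl⟩
    exact ⟨_, (hP.star_mul_mul U).re_diag_mem_Icc, (hD.re_trace_mul_eq_sum P).symm⟩
  · rintro ⟨q, hq, rfl⟩
    set Q : Matrix n n 𝕜 := diagonal fun i ↦ (q i : 𝕜)
    have hQ : star (U : Matrix n n 𝕜) * (U * Q * star (U : Matrix n n 𝕜)) * U = Q := by
      simp only [← mul_assoc, Unitary.coe_star_mul_self, one_mul]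
      simp only [mul_assoc, Unitary.coe_star_mul_self, mul_one]
    refine ⟨U * Q * star (U : Matrix n n 𝕜), ?_, ?_⟩
    · simpa only [Unitary.coe_star, star_star] using (isEffect_diagonal hq).star_mul_mul (star U)
    · rw [hD.re_trace_mul_eq_sum, hQ]
      simp only [Q, diagonal_apply_eq, RCLike.ofReal_re]

end Matrix

theorem operational_norm_eq_trace_norm_general
    (d : ℕ)
    (D : Matrix (Fin d) (Fin d) ℂ) (hD : D.IsHermitian) :
    sSup {x : ℝ | ∃ P : Matrix (Fin d) (Fin d) ℂ,
        P.PosSemidef ∧ (1 - P).PosSemidef ∧ x = ((P * D).trace).re} -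
      sInf {x : ℝ | ∃ P : Matrix (Fin d) (Fin d) ℂ,
        P.PosSemidef ∧ (1 - P).PosSemidef ∧ x = ((P * D).trace).re} =
      ∑ i, |hD.eigenvalues i| := by
  have hvalues := hD.setOf_isEffect_re_trace_mul_eq_image
  simp only [Matrix.IsEffect, RCLike.re_to_complex, and_assoc] at hvalues
  rw [hvalues, (isGreatest_image_sum_mul_Icc _).csSup_eq, (isLeast_image_sum_mul_Icc _).csInf_eq,
    ← sum_sub_distrib]
  simp only [max_sub_min_eq_abs', sub_zero]

/-- The operational norm in quantum theory is the trace norm: the supremum minus the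
infimum of `Tr[PD]` over all quantum effects `0 ≤ P ≤ I` equals `Σᵢ |λᵢ(D)|`. -/
theorem operational_norm_eq_trace_norm
    (d : ℕ) (hd : 0 < d)
    (D : Matrix (Fin d) (Fin d) ℂ) (hD : D.IsHermitian) :
    sSup {x : ℝ | ∃ P : Matrix (Fin d) (Fin d) ℂ,
        P.PosSemidef ∧ (1 - P).PosSemidef ∧ x = ((P * D).trace).re} -
      sInf {x : ℝ | ∃ P : Matrix (Fin d) (Fin d) ℂ,
        P.PosSemidef ∧ (1 - P).PosSemidef ∧ x = ((P * D).trace).re} =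
      ∑ i, |hD.eigenvalues i| :=
  operational_norm_eq_trace_norm_general d D hD
end

section
/- Let n be a positive natural number and let G be a subgroup of the group of invertible n×n real matrices such that the corresponding set of matrices is compact (so G is a compact matrix Lie group with the subspace topology). Let f : G → G be a group homomorphism that is continuous and injective. Then f is surjective. -/
/-!
The images `fᵏ(G)` form a descending chain of compact subgroups of `GLₙ(ℝ)`, and as soon as
`fᵏ⁺¹(G) = fᵏ(G)`, injectivity of `fᵏ` forces `f(G) = G`. The chain stabilises because compact
matrix groups are real algebraic sets: for `g ∉ K`, Stone–Weierstrass gives a polynomial `P`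
that is small on `K` and close to `1` on `gK`, and its Haar average `x ↦ ∫_K P(xk) dk` is again
a polynomial, constant on `K` but not at `g`. So a compact subgroup is recovered from its
vanishing ideal, and ascending chains of ideals of `ℝ[xᵢⱼ]` stabilise by Hilbert's basis theorem.
-/

open MvPolynomial MeasureTheory Function

theorem Matrix.isEmbedding_units_val {m 𝕜 : Type*} [Fintype m] [DecidableEq m] [Field 𝕜]
    [TopologicalSpace 𝕜] [IsTopologicalRing 𝕜] [ContinuousInv₀ 𝕜] :
    Topology.IsEmbedding (Units.val : (Matrix m m 𝕜)ˣ → Matrix m m 𝕜) :=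
  Units.isEmbedding_val_mk'
    (fun A hA => (continuousAt_matrix_inv A (Ring.inverse_eq_inv' (G₀ := 𝕜) ▸
      continuousAt_inv₀ ((Matrix.isUnit_iff_isUnit_det A).mp hA).ne_zero)).continuousWithinAt)
    fun u => (Matrix.coe_units_inv u).symm

theorem Matrix.continuous_vec {m n R : Type*} [TopologicalSpace R] :
    Continuous (Matrix.vec : Matrix m n R → n × m → R) :=
  continuous_pi fun _ => continuous_id.matrix_elem _ _

namespace MvPolynomial

variable {σ : Type*}

theorem exists_abs_eval_sub_lt_of_isCompact {T : Set (σ → ℝ)} (hT : IsCompact T)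
    {f : (σ → ℝ) → ℝ} (hf : ContinuousOn f T) {ε : ℝ} (hε : 0 < ε) :
    ∃ P : MvPolynomial σ ℝ, ∀ x ∈ T, |eval x P - f x| < ε := by
  have : CompactSpace T := isCompact_iff_compactSpace.mp hT
  let Φ : MvPolynomial σ ℝ →ₐ[ℝ] C(T, ℝ) :=
    aeval fun s => ⟨fun x => (x : σ → ℝ) s, (continuous_apply s).comp continuous_subtype_val⟩
  have hΦ (P : MvPolynomial σ ℝ) (x : T) : Φ P x = eval (x : σ → ℝ) P := by
    rw [← ContinuousMap.evalAlgHom_apply ℝ, comp_aeval_apply, ← aeval_eq_eval]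
    rfl
  have hsep : Φ.range.SeparatesPoints := by
    intro x y hxy
    obtain ⟨s, hs⟩ := Function.ne_iff.mp (Subtype.coe_ne_coe.mpr hxy)
    exact ⟨_, ⟨_, ⟨X s, rfl⟩, rfl⟩, by simpa [hΦ] using hs⟩
  obtain ⟨⟨_, P, rfl⟩, hP⟩ := ContinuousMap.exists_mem_subalgebra_near_continuous_of_separatesPoints
    Φ.range hsep (T.domRestrict f) hf.domRestrict ε hε
  exact ⟨P, fun x hx => by simpa [hΦ] using hP ⟨x, hx⟩⟩

theorem exists_eval_near_zero_near_one_of_disjoint [Finite σ] {A B : Set (σ → ℝ)} (hA : IsCompact A)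
    (hB : IsCompact B) (hAB : Disjoint A B) {ε : ℝ} (hε : 0 < ε) :
    ∃ P : MvPolynomial σ ℝ, (∀ x ∈ A, |eval x P| < ε) ∧ ∀ x ∈ B, |eval x P - 1| < ε := by
  obtain ⟨F, hFA, hFB, -⟩ := exists_continuous_zero_one_of_isClosed hA.isClosed hB.isClosed hAB
  obtain ⟨P, hP⟩ := exists_abs_eval_sub_lt_of_isCompact (hA.union hB) F.continuous.continuousOn hε
  refine ⟨P, fun x hx => ?_, fun x hx => ?_⟩
  · simpa [hFA hx] using hP x (.inl hx)
  · simpa [hFB hx] using hP x (.inr hx)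

theorem eval_sumElim_eq_sum {τ : Type*} [Fintype σ] [Fintype τ] {R : Type*} [CommSemiring R]
    (Q : MvPolynomial (σ ⊕ τ) R) (a : σ → R) (b : τ → R) :
    eval (Sum.elim a b) Q = ∑ d ∈ Q.support,
      coeff d Q * (∏ s, a s ^ d (.inl s)) * ∏ t, b t ^ d (.inr t) := by
  rw [eval_eq']
  refine Finset.sum_congr rfl fun d _ => ?_
  rw [Fintype.prod_sum_type, mul_assoc]
  rfl

theorem exists_eval_eq_integral_eval_sumElim {τ Ω : Type*} [Fintype σ] [Fintype τ]
    [TopologicalSpace Ω] [CompactSpace Ω] [MeasurableSpace Ω] [OpensMeasurableSpace Ω]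
    (μ : Measure Ω) [IsFiniteMeasure μ] {b : Ω → τ → ℝ} (hb : Continuous b)
    (Q : MvPolynomial (σ ⊕ τ) ℝ) :
    ∃ P : MvPolynomial σ ℝ, ∀ a, eval a P = ∫ ω, eval (Sum.elim a (b ω)) Q ∂μ := by
  refine ⟨∑ d ∈ Q.support, monomial (Finsupp.equivFunOnFinite.symm fun s => d (.inl s))
    (coeff d Q * ∫ ω, ∏ t, b ω t ^ d (.inr t) ∂μ), fun a => ?_⟩
  have hint (d : σ ⊕ τ →₀ ℕ) : Integrable (fun ω => ∏ t, b ω t ^ d (.inr t)) μ :=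
    (by fun_prop : Continuous _).integrable_of_hasCompactSupport (.of_compactSpace _)
  simp_rw [eval_sumElim_eq_sum, map_sum, eval_monomial, Finsupp.prod_pow,
    Finsupp.coe_equivFunOnFinite_symm]
  rw [integral_finsetSum _ fun d _ => (hint d).const_mul _]
  refine Finset.sum_congr rfl fun d _ => ?_
  rw [integral_const_mul]
  ring

end MvPolynomial

section MatrixGroup

variable {m : Type*} [Fintype m]

theorem MvPolynomial.exists_eval_sumElim_eq_eval_mul {R : Type*} [CommSemiring R]
    (P : MvPolynomial (m × m) R) :
    ∃ Q : MvPolynomial ((m × m) ⊕ (m × m)) R, ∀ x y : Matrix m m R,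
      eval (Sum.elim x.vec y.vec) Q = eval (x * y).vec P := by
  refine ⟨bind₁ (fun p => ∑ k, X (.inl (k, p.2)) * X (.inr (p.1, k))) P, fun x y => ?_⟩
  rw [← aeval_eq_eval, aeval_bind₁, aeval_eq_eval]
  congr 2
  funext p
  simp [Matrix.vec, Matrix.mul_apply]

theorem MvPolynomial.exists_eval_eq_integral_eval_mul {Ω : Type*} [TopologicalSpace Ω]
    [CompactSpace Ω] [MeasurableSpace Ω] [OpensMeasurableSpace Ω] (μ : Measure Ω)
    [IsFiniteMeasure μ] {w : Ω → Matrix m m ℝ} (hw : Continuous w) (P : MvPolynomial (m × m) ℝ) :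
    ∃ Q : MvPolynomial (m × m) ℝ, ∀ x : Matrix m m ℝ,
      eval x.vec Q = ∫ ω, eval (x * w ω).vec P ∂μ := by
  obtain ⟨Pmul, hPmul⟩ := exists_eval_sumElim_eq_eval_mul P
  obtain ⟨Q, hQ⟩ := exists_eval_eq_integral_eval_sumElim μ
    (b := fun ω => (w ω).vec) (Matrix.continuous_vec.comp hw) Pmul
  exact ⟨Q, fun x => by simp_rw [hQ, hPmul]⟩

variable [DecidableEq m]

theorem Subgroup.exists_eval_eq_zero_ne_zero_of_notMem (K : Subgroup (Matrix m m ℝ)ˣ)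
    (hK : IsCompact (K : Set (Matrix m m ℝ)ˣ)) {g : Matrix m m ℝ}
    (hg : g ∉ Units.val '' (K : Set (Matrix m m ℝ)ˣ)) :
    ∃ P : MvPolynomial (m × m) ℝ,
      (∀ u ∈ K, eval (u : Matrix m m ℝ).vec P = 0) ∧ eval g.vec P ≠ 0 := by
  have : CompactSpace K := isCompact_iff_compactSpace.mp hK
  let _ : MeasurableSpace K := borel K
  have : BorelSpace K := ⟨rfl⟩
  let μ : Measure K := Measure.haarMeasure ⊤
  have : IsProbabilityMeasure μ := ⟨Measure.haarMeasure_self⟩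
  let w : K → Matrix m m ℝ := fun u => (u : (Matrix m m ℝ)ˣ)
  have hw : Continuous w := Units.continuous_val.comp continuous_subtype_val
  have hgw : Continuous fun u => (g * w u).vec :=
    Matrix.continuous_vec.comp (continuous_const.mul hw)
  have hdisj : Disjoint (Set.range fun u => (w u).vec) (Set.range fun u => (g * w u).vec) := by
    refine Set.disjoint_range_iff.mpr fun u v huv => hg ⟨u * v⁻¹, mul_mem u.2 (inv_mem v.2), ?_⟩
    simp [w, Matrix.vec_inj.mp huv, mul_assoc]
  obtain ⟨P, hPK, hPgK⟩ := exists_eval_near_zero_near_one_of_disjoint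
    (isCompact_range (Matrix.continuous_vec.comp hw)) (isCompact_range hgw) hdisj (ε := 1 / 4)
    (by norm_num)
  obtain ⟨Q, hQ⟩ := exists_eval_eq_integral_eval_mul μ hw P
  set c := ∫ v, eval (w v).vec P ∂μ
  have hQK (u : K) : eval (w u).vec Q = c :=
    (hQ _).trans (integral_mul_left_eq_self (fun v => eval (w v).vec P) u)
  have hc : |c| ≤ 1 / 4 := by
    simpa using norm_integral_le_of_norm_le_const (μ := μ) (f := fun v => eval (w v).vec P)
      (.of_forall fun v => (hPK _ ⟨v, rfl⟩).le)
  have hQg : 3 / 4 ≤ eval g.vec Q := by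
    rw [hQ]
    have hint : Integrable (fun v => eval (g * w v).vec P) μ :=
      ((continuous_eval P).comp hgw).integrable_of_hasCompactSupport (.of_compactSpace _)
    calc (3 / 4 : ℝ) = ∫ _, 3 / 4 ∂μ := by simp
      _ ≤ _ := integral_mono (integrable_const _) hint fun v => by
        linarith [(abs_lt.mp (hPgK _ ⟨v, rfl⟩)).1]
  refine ⟨Q - C c, fun u hu => by simp [← hQK ⟨u, hu⟩, w], ?_⟩
  rw [map_sub, eval_C]
  linarith [(abs_le.mp hc).2]

theorem Subgroup.exists_succ_eq_of_antitone_of_isCompact (K : ℕ → Subgroup (Matrix m m ℝ)ˣ)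
    (hanti : Antitone K) (hK : ∀ k, IsCompact (K k : Set (Matrix m m ℝ)ˣ)) :
    ∃ k, K (k + 1) = K k := by
  let I : ℕ →o Ideal (MvPolynomial (m × m) ℝ) :=
    ⟨fun k => vanishingIdeal ℝ ((fun u : (Matrix m m ℝ)ˣ => (u : Matrix m m ℝ).vec) '' K k),
      fun _ _ hkl => vanishingIdeal_anti_mono (Set.image_mono (hanti hkl))⟩
  obtain ⟨k, hk⟩ := monotone_stabilizes_iff_noetherian.mpr inferInstance I
  refine ⟨k, le_antisymm (hanti k.le_succ) fun u hu => ?_⟩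
  by_contra hu'
  obtain ⟨P, hP, hPu⟩ := (K (k + 1)).exists_eval_eq_zero_ne_zero_of_notMem (hK _)
    (g := u) (by rintro ⟨v, hv, hvu⟩; exact hu' (Units.ext hvu ▸ hv))
  have hPI : P ∈ I k := by
    rw [hk (k + 1) k.le_succ]
    rintro _ ⟨v, hv, rfl⟩
    simpa using hP v hv
  exact hPu (by simpa using hPI _ ⟨u, hu, rfl⟩)

end MatrixGroup

theorem Function.Injective.surjective_of_range_iterate_succ_eq {α : Type*} {f : α → α}
    (hf : Injective f) {k : ℕ} (hk : Set.range f^[k + 1] = Set.range f^[k]) : Surjective f := by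
  intro y
  obtain ⟨x, hx⟩ : f^[k] y ∈ Set.range f^[k + 1] := hk ▸ Set.mem_range_self y
  exact ⟨x, hf.iterate k (by rwa [iterate_succ_apply] at hx)⟩

theorem continuous_injective_endomorphism_surjective_general
    (n : ℕ)
    (G : Subgroup (Matrix (Fin n) (Fin n) ℝ)ˣ)
    (hcompact : IsCompact
      ((fun u : (Matrix (Fin n) (Fin n) ℝ)ˣ => (u : Matrix (Fin n) (Fin n) ℝ)) ''
        (G : Set (Matrix (Fin n) (Fin n) ℝ)ˣ)))
    (f : G →* G) (hf_cont : Continuous f) (hf_inj : Function.Injective f) :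
    Function.Surjective f := by
  have : CompactSpace G :=
    isCompact_iff_compactSpace.mp (Matrix.isEmbedding_units_val.isCompact_iff.mpr hcompact)
  let fE : Monoid.End G := f
  let K (k : ℕ) : Subgroup (Matrix (Fin n) (Fin n) ℝ)ˣ := (fE ^ k).range.map G.subtype
  have hK (k : ℕ) : (K k : Set (Matrix (Fin n) (Fin n) ℝ)ˣ) = Subtype.val '' Set.range f^[k] := by
    change G.subtype '' Set.range (fE ^ k) = _
    rw [Monoid.End.coe_pow]
    rfl
  obtain ⟨k, hk⟩ := Subgroup.exists_succ_eq_of_antitone_of_isCompact K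
    (antitone_nat_of_succ_le fun k => by
      rw [← SetLike.coe_subset_coe, hK, hK]
      exact Set.image_mono (Set.range_comp_subset_range f f^[k]))
    fun k => hK k ▸ (isCompact_range (hf_cont.iterate k)).image continuous_subtype_val
  refine hf_inj.surjective_of_range_iterate_succ_eq (k := k) ?_
  have hKk := congrArg SetLike.coe hk
  rw [hK, hK] at hKk
  exact Subtype.val_injective.image_injective hKk

/-- A continuous injective group endomorphism of a compact matrix group is
surjective. -/
theorem continuous_injective_endomorphism_surjective
    (n : ℕ) (hn : 0 < n)
    (G : Subgroup (Matrix (Fin n) (Fin n) ℝ)ˣ)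
    (hcompact : IsCompact
      ((fun u : (Matrix (Fin n) (Fin n) ℝ)ˣ => (u : Matrix (Fin n) (Fin n) ℝ)) ''
        (G : Set (Matrix (Fin n) (Fin n) ℝ)ˣ)))
    (f : G →* G) (hf_cont : Continuous f) (hf_inj : Function.Injective f) :
    Function.Surjective f :=
  continuous_injective_endomorphism_surjective_general n G hcompact f hf_cont hf_inj
end
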